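/- arXiv:0709.4116 — 3 statements merged into one kernel-verified Lean document; each statement's English description precedes it below -/
import Mathlib

section
/- Let R be a commutative ring. The substitution ring homomorphism from the formal power series ring R[[c₁, c₂]] to the formal power series ring R[[t₁, t₂]] that sends c₁ to t₁ + t₂ and c₂ to t₁·t₂ is injective. -/
/-!
The coefficient of `t₁^(m+k) t₂^k` in `(t₁ + t₂)^e₀ (t₁t₂)^e₁` vanishes when `e₁ > k`, and for
`e₁ = k` it is `1` if `e₀ = m` and `0` otherwise. Hence that coefficient of the substitution of `f`
is the coefficient of `c₁^m c₂^k` in `f` plus a combination of coefficients of `c₁^a c₂^b` with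
`b < k`: substitution is unitriangular, and an element of its kernel vanishes by strong induction
on the exponent of `c₂`.
-/

/-- Substitution of multivariate polynomials (each with zero constant term) into a
multivariate formal power series, defined coefficientwise: only source monomials of
total degree at most the total degree of the target monomial can contribute, and these
form a finite set. -/
noncomputable def substPowerSeries {R : Type*} [CommRing R] {σ τ : Type*}
    [Fintype σ] [DecidableEq σ] (a : σ → MvPolynomial τ R)
    (f : MvPowerSeries σ R) : MvPowerSeries τ R :=
  fun d : τ →₀ ℕ =>
    ∑ e ∈ Finset.Iic (Finsupp.equivFunOnFinite.symm fun _ : σ => d.sum fun _ k => k),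
      MvPowerSeries.coeff e f * MvPolynomial.coeff d (∏ i, a i ^ e i)

open MvPolynomial

theorem substPowerSeries_sub {R : Type*} [CommRing R] {σ τ : Type*} [Fintype σ] [DecidableEq σ]
    (a : σ → MvPolynomial τ R) (f g : MvPowerSeries σ R) :
    substPowerSeries a (f - g) = substPowerSeries a f - substPowerSeries a g := by
  funext d
  simp only [substPowerSeries, map_sub, sub_mul, Finset.sum_sub_distrib]
  rfl

theorem mem_Iic_const_degree_of_le {σ : Type*} [Fintype σ] [DecidableEq σ] {e d : σ →₀ ℕ}
    (h : e ≤ d) :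
    e ∈ Finset.Iic (Finsupp.equivFunOnFinite.symm fun _ : σ => d.sum fun _ k => k) :=
  Finset.mem_Iic.2 fun i => (h i).trans (Finsupp.le_degree i d)

noncomputable def bideg (a b : ℕ) : Fin 2 →₀ ℕ := Finsupp.single 0 a + Finsupp.single 1 b

@[simp] theorem bideg_apply_zero (a b : ℕ) : bideg a b 0 = a := by simp [bideg]
@[simp] theorem bideg_apply_one (a b : ℕ) : bideg a b 1 = b := by simp [bideg]

theorem bideg_eta (d : Fin 2 →₀ ℕ) : bideg (d 0) (d 1) = d := by
  ext i; fin_cases i <;> simp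

theorem bideg_le_bideg_iff {a b a' b' : ℕ} : bideg a b ≤ bideg a' b' ↔ a ≤ a' ∧ b ≤ b' := by
  simp [Finsupp.le_def, Fin.forall_fin_two]

theorem bideg_add_bideg (a b a' b' : ℕ) : bideg a b + bideg a' b' = bideg (a + a') (b + b') := by
  ext i; fin_cases i <;> simp

theorem bideg_eq_bideg_iff {a b a' b' : ℕ} : bideg a b = bideg a' b' ↔ a = a' ∧ b = b' := by
  rw [le_antisymm_iff, bideg_le_bideg_iff, bideg_le_bideg_iff]
  omega

section

variable {R : Type*} [CommRing R]

theorem X_zero_mul_X_one_pow (k : ℕ) :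
    (X 0 * X 1 : MvPolynomial (Fin 2) R) ^ k = monomial (bideg k k) 1 := by
  rw [mul_pow, X_pow_eq_monomial, X_pow_eq_monomial, monomial_mul, one_mul, bideg]

theorem coeff_bideg_zero_X_add_X_pow (m n : ℕ) :
    coeff (bideg m 0) ((X 0 + X 1 : MvPolynomial (Fin 2) R) ^ n) = if n = m then 1 else 0 := by
  rw [coeff_add_pow]
  split_ifs with h <;> simp_all

theorem coeff_bideg_X_add_X_pow_mul_X_mul_X_pow (m k : ℕ) (e : Fin 2 →₀ ℕ) (he : k ≤ e 1) :
    coeff (bideg (m + k) k) ((X 0 + X 1 : MvPolynomial (Fin 2) R) ^ e 0 * (X 0 * X 1) ^ e 1)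
      = if e = bideg m k then 1 else 0 := by
  rw [X_zero_mul_X_one_pow]
  rcases he.lt_or_eq with hlt | heq
  · rw [coeff_mul_monomial', if_neg, if_neg]
    · rintro rfl; simp at hlt
    · rw [bideg_le_bideg_iff]; omega
  · subst heq
    have hsplit : bideg (m + e 1) (e 1) = bideg m 0 + bideg (e 1) (e 1) := by
      rw [bideg_add_bideg, zero_add]
    rw [hsplit, coeff_mul_monomial, mul_one, coeff_bideg_zero_X_add_X_pow]
    conv_rhs => rw [← bideg_eta e]
    simp [bideg_eq_bideg_iff]

theorem prod_sum_prod_pow (e : Fin 2 →₀ ℕ) :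
    ∏ i, (![X 0 + X 1, X 0 * X 1] : Fin 2 → MvPolynomial (Fin 2) R) i ^ e i
      = (X 0 + X 1) ^ e 0 * (X 0 * X 1) ^ e 1 := by
  simp [Fin.prod_univ_two]

theorem eq_zero_of_substPowerSeries_sum_prod_eq_zero {f : MvPowerSeries (Fin 2) R}
    (hf : substPowerSeries (![X 0 + X 1, X 0 * X 1] : Fin 2 → MvPolynomial (Fin 2) R) f = 0) :
    f = 0 := by
  suffices h : ∀ k m, MvPowerSeries.coeff (bideg m k) f = 0 by
    ext e
    rw [← bideg_eta e, h, map_zero]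
  intro k
  induction k using Nat.strong_induction_on with
  | _ k ih =>
  intro m
  have hmem : bideg m k ∈ Finset.Iic (Finsupp.equivFunOnFinite.symm
      fun _ : Fin 2 => (bideg (m + k) k).sum fun _ j => j) :=
    mem_Iic_const_degree_of_le (bideg_le_bideg_iff.2 ⟨by omega, le_rfl⟩)
  have hcoeff := congrFun hf (bideg (m + k) k)
  rw [substPowerSeries, Finset.sum_eq_single_of_mem _ hmem] at hcoeff
  · rwa [prod_sum_prod_pow,
      coeff_bideg_X_add_X_pow_mul_X_mul_X_pow m k _ (bideg_apply_one m k).ge, if_pos rfl,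
      mul_one] at hcoeff
  · intro e _ hne
    rcases lt_or_ge (e 1) k with hlt | hle
    · rw [← bideg_eta e, ih _ hlt, zero_mul]
    · rw [prod_sum_prod_pow, coeff_bideg_X_add_X_pow_mul_X_mul_X_pow m k e hle, if_neg hne,
        mul_zero]

end

/-- The substitution ring homomorphism R[[c₁, c₂]] → R[[t₁, t₂]] sending
c₁ ↦ t₁ + t₂ and c₂ ↦ t₁·t₂ is injective. -/
theorem subst_sum_prod_injective (R : Type*) [CommRing R] :
    Function.Injective (substPowerSeries
      (![MvPolynomial.X 0 + MvPolynomial.X 1, MvPolynomial.X 0 * MvPolynomial.X 1] :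
        Fin 2 → MvPolynomial (Fin 2) R)) := by
  intro f g hfg
  rw [← sub_eq_zero, ← substPowerSeries_sub] at hfg
  exact sub_eq_zero.1 (eq_zero_of_substPowerSeries_sum_prod_eq_zero hfg)
end

section
/- Let R be a commutative ring and n a natural number. Every formal power series f ∈ R[[t₁, …, tₙ]] that is fixed by the action of every permutation of {1, …, n} permuting the variables lies in the image of the substitution ring homomorphism R[[c₁, …, cₙ]] → R[[t₁, …, tₙ]] sending cᵢ to the i-th elementary symmetric polynomial eᵢ(t₁, …, tₙ). -/
/-!
The truncation of `f` below total degree `m + 1` is symmetric, hence by the fundamental theorem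
a polynomial `P m` in the elementary symmetric polynomials. Since `eᵢ` is homogeneous of degree
`i`, the coefficient at `d` of a substitution only sees source monomials `cᵉ` of weight
`∑ i • e i = deg d`; so the series whose coefficient at `e` is that of `P (weight e)` is a
preimage of `f`.
-/

open MvPolynomial Finsupp

theorem MvPolynomial.isHomogeneous_esymm (σ R : Type*) [CommSemiring R] [Fintype σ] (k : ℕ) :
    (esymm σ R k).IsHomogeneous k := by
  classical
  rw [esymm_eq_sum_monomial]
  refine IsHomogeneous.sum _ _ _ fun t ht => isHomogeneous_monomial _ ?_
  simp [map_sum, degree_single, (Finset.mem_powersetCard.mp ht).2]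

theorem MvPowerSeries.isSymmetric_truncTotal {R σ : Type*} [CommSemiring R] [Finite σ]
    {f : MvPowerSeries σ R}
    (hf : ∀ (g : Equiv.Perm σ) (d : σ →₀ ℕ),
      MvPowerSeries.coeff (equivMapDomain g d) f = MvPowerSeries.coeff d f)
    (k : ℕ) : (MvPowerSeries.truncTotal k f).IsSymmetric := by
  intro g
  ext d
  obtain ⟨d, rfl⟩ := (Finsupp.equivCongrLeft g).surjective d
  rw [equivCongrLeft_apply, equivMapDomain_eq_mapDomain, coeff_rename_mapDomain _ g.injective,
    MvPowerSeries.coeff_truncTotal_eq_ite, MvPowerSeries.coeff_truncTotal_eq_ite,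
    degree_mapDomain, ← equivMapDomain_eq_mapDomain, hf]

section Substitution

variable {R σ τ : Type*} [Fintype σ]

theorem MvPolynomial.coeff_prod_pow_eq_zero_of_weight_ne [CommSemiring R]
    {a : σ → MvPolynomial τ R} {w : σ → ℕ} (ha : ∀ i, (a i).IsHomogeneous (w i))
    {e : σ →₀ ℕ} {d : τ →₀ ℕ} (h : weight w e ≠ d.degree) :
    coeff d (∏ i, a i ^ e i) = 0 := by
  refine (IsHomogeneous.prod _ _ _ fun i _ => (ha i).pow (e i)).coeff_eq_zero ?_
  rw [weight_eq_sum] at h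
  simpa [mul_comm] using h.symm

theorem MvPolynomial.coeff_aeval_eq_sum [CommSemiring R] (a : σ → MvPolynomial τ R)
    (p : MvPolynomial σ R) (d : τ →₀ ℕ) :
    coeff d (aeval a p) = ∑ e ∈ p.support, coeff e p * coeff d (∏ i, a i ^ e i) := by
  simp only [aeval_def, eval₂_eq', coeff_sum, algebraMap_eq, coeff_C_mul]

theorem coeff_substPowerSeries_of_isHomogeneous [CommRing R] [DecidableEq σ]
    {a : σ → MvPolynomial τ R} {w : σ → ℕ} (ha : ∀ i, (a i).IsHomogeneous (w i))
    (hw : ∀ i, w i ≠ 0) (P : ℕ → MvPolynomial σ R) (d : τ →₀ ℕ) :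
    MvPowerSeries.coeff d (substPowerSeries a fun e => coeff e (P (weight w e)))
      = coeff d (aeval a (P d.degree)) := by
  set m := d.degree
  set c : (σ →₀ ℕ) → R := fun e => coeff d (∏ i, a i ^ e i)
  have hc : ∀ e, c e ≠ 0 → weight w e = m := fun e he => by
    by_contra h
    exact he (coeff_prod_pow_eq_zero_of_weight_ne ha h)
  have hsupp : Function.support (fun e => coeff e (P m) * c e) ⊆
      Finset.Iic (equivFunOnFinite.symm fun _ : σ => m) := fun e he => by
    have hwe := hc e (right_ne_zero_of_mul he)
    simp only [Finset.coe_Iic, Set.mem_Iic, Finsupp.le_def, coe_equivFunOnFinite_symm]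
    exact fun i => hwe ▸ le_weight w (hw i) e
  show ∑ e ∈ Finset.Iic _, coeff e (P (weight w e)) * c e = _
  calc ∑ e ∈ Finset.Iic (equivFunOnFinite.symm fun _ : σ => m), coeff e (P (weight w e)) * c e
    _ = ∑ e ∈ Finset.Iic (equivFunOnFinite.symm fun _ : σ => m), coeff e (P m) * c e := by
      refine Finset.sum_congr rfl fun e _ => ?_
      by_cases h : c e = 0
      · rw [h, mul_zero, mul_zero]
      · rw [hc e h]
    _ = ∑ᶠ e, coeff e (P m) * c e := (finsum_eq_sum_of_support_subset _ hsupp).symm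
    _ = ∑ e ∈ (P m).support, coeff e (P m) * c e :=
      finsum_eq_sum_of_support_subset _ fun e he =>
        MvPolynomial.mem_support_iff.mpr (left_ne_zero_of_mul he)
    _ = coeff d (aeval a (P m)) := (coeff_aeval_eq_sum a (P m) d).symm

end Substitution

/-- Every formal power series f ∈ R[[t₁, …, tₙ]] fixed by all permutations of the
variables lies in the image of the substitution homomorphism
R[[c₁, …, cₙ]] → R[[t₁, …, tₙ]], cᵢ ↦ eᵢ(t₁, …, tₙ). -/
theorem symmetric_mem_range_subst_esymm (R : Type*) [CommRing R] (n : ℕ)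
    (f : MvPowerSeries (Fin n) R)
    (hf : ∀ (g : Equiv.Perm (Fin n)) (d : Fin n →₀ ℕ),
      MvPowerSeries.coeff (Finsupp.equivMapDomain g d) f = MvPowerSeries.coeff d f) :
    f ∈ Set.range
      (substPowerSeries (fun i : Fin n => MvPolynomial.esymm (Fin n) R (i.1 + 1))) := by
  have hP (m : ℕ) : ∃ P : MvPolynomial (Fin n) R,
      aeval (fun i : Fin n => esymm (Fin n) R (i.1 + 1)) P =
        MvPowerSeries.truncTotal (m + 1) f := by
    obtain ⟨P, hP⟩ := esymmAlgHom_fin_surjective R le_rfl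
      ⟨_, (mem_symmetricSubalgebra _).mpr (MvPowerSeries.isSymmetric_truncTotal hf (m + 1))⟩
    exact ⟨P, by rw [← esymmAlgHom_apply, hP]⟩
  choose P hP using hP
  refine ⟨fun e => coeff e (P (weight (fun i : Fin n => i.1 + 1) e)),
    MvPowerSeries.ext fun d => ?_⟩
  rw [coeff_substPowerSeries_of_isHomogeneous (fun i => isHomogeneous_esymm _ _ _)
    (fun i => i.1.succ_ne_zero) P d, hP, MvPowerSeries.coeff_truncTotal _ d.degree.lt_succ_self]
end

section
/- Let R be a commutative ring and m, n natural numbers. The substitution ring homomorphism from R[[c′₁, …, c′ₘ, c″₁, …, c″ₙ]] to R[[t′₁, …, t′ₘ, t″₁, …, t″ₙ]] sending c′ᵢ to the i-th elementary symmetric polynomial in the variables t′₁, …, t′ₘ and c″ⱼ to the j-th elementary symmetric polynomial in the variables t″₁, …, t″ₙ is injective, and its image is exactly the subring of power series fixed by the blockwise action of Perm({1,…,m}) × Perm({1,…,n}) permuting the variables t′₁, …, t′ₘ among themselves and the variables t″₁, …, t″ₙ among themselves. -/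
/-- The family sending c′ᵢ (i.e. the inl-variables) to the i-th elementary symmetric
polynomial in the variables t′₁, …, t′ₘ and c″ⱼ (the inr-variables) to the j-th
elementary symmetric polynomial in the variables t″₁, …, t″ₙ. -/
noncomputable def blockEsymm (R : Type*) [CommRing R] (m n : ℕ) :
    Fin m ⊕ Fin n → MvPolynomial (Fin m ⊕ Fin n) R :=
  Sum.elim
    (fun i : Fin m => MvPolynomial.rename Sum.inl (MvPolynomial.esymm (Fin m) R (i.1 + 1)))
    (fun j : Fin n => MvPolynomial.rename Sum.inr (MvPolynomial.esymm (Fin n) R (j.1 + 1)))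

/-!
Give the variable `c′ᵢ` and `c″ᵢ` the weight `i`. Since `eᵢ` is homogeneous of degree `i`, the
substitution maps the weight-`k` part of a power series to a homogeneous polynomial of degree `k`
by the polynomial substitution `cᵢ ↦ eᵢ`; so the power-series statement reduces, degree by degree,
to the polynomial one. Separating the two blocks of variables, `R[t′, t″] ≅ R[t″][t′]`, the
polynomial substitution becomes `eᵢ` substituted over `R[t″]` after `eⱼ` substituted
coefficientwise, and the fundamental theorem of symmetric polynomials, applied to both, shows it
is injective with image the block-invariant polynomials.
-/

open MvPolynomial

namespace MvPolynomial

variable {R σ τ : Type*} [CommSemiring R]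

theorem IsWeightedHomogeneous.isHomogeneous_aeval {w : σ → ℕ} {a : σ → MvPolynomial τ R}
    (ha : ∀ s, (a s).IsHomogeneous (w s)) {p : MvPolynomial σ R} {k : ℕ}
    (hp : p.IsWeightedHomogeneous w k) : (aeval a p).IsHomogeneous k := by
  induction hp using IsWeightedHomogeneous.induction_on with
  | zero => simpa using isHomogeneous_zero τ R k
  | add p q _ _ hp hq => simpa using hp.add hq
  | monomial d r hd =>
    rw [aeval_monomial, algebraMap_eq, ← hd, Finsupp.weight_apply, ← zero_add (d.sum _)]
    refine (isHomogeneous_C τ r).mul (IsHomogeneous.prod _ _ _ fun s _ => ?_)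
    simpa [mul_comm] using (ha s).pow (d s)

theorem homogeneousComponent_aeval {w : σ → ℕ} {a : σ → MvPolynomial τ R}
    (ha : ∀ s, (a s).IsHomogeneous (w s)) (k : ℕ) (p : MvPolynomial σ R) :
    homogeneousComponent k (aeval a p) = aeval a (weightedHomogeneousComponent w k p) := by
  classical
  induction p using MvPolynomial.induction_on' with
  | monomial d r =>
    have hd := isWeightedHomogeneous_monomial w d r rfl
    rw [homogeneousComponent_of_mem (hd.isHomogeneous_aeval ha),
      weightedHomogeneousComponent_of_mem hd]
    split_ifs <;> simp
  | add p q hp hq => simp only [map_add, hp, hq]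

theorem rename_eq_self_iff (e : τ ≃ τ) (p : MvPolynomial τ R) :
    rename e p = p ↔ ∀ d, coeff (d.equivMapDomain e) p = coeff d p := by
  have key (d : τ →₀ ℕ) : coeff (d.equivMapDomain e) (rename e p) = coeff d p := by
    rw [Finsupp.equivMapDomain_eq_mapDomain, coeff_rename_mapDomain _ e.injective]
  constructor
  · intro h d
    conv_lhs => rw [← h]
    exact key d
  · intro h
    ext d
    obtain ⟨d, rfl⟩ := (Finsupp.equivCongrLeft e).surjective d
    exact (key d).trans (h d).symm

variable (R σ) in
theorem isHomogeneous_esymm_s4 [Fintype σ] (k : ℕ) :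
    (esymm σ R k).IsHomogeneous k := by
  rw [esymm]
  refine IsHomogeneous.sum _ _ _ fun t ht => ?_
  simpa [(Finset.mem_powersetCard.mp ht).2] using
    IsHomogeneous.prod t _ (fun _ => 1) fun i _ => isHomogeneous_X R i

variable {S T : Type*} [CommRing S] [CommRing T] {k : ℕ}

variable (S k) in
theorem aeval_esymm_injective :
    Function.Injective (aeval (R := S) fun i : Fin k => esymm (Fin k) S (i + 1)) := by
  intro p q h
  refine esymmAlgHom_fin_injective S le_rfl (Subtype.ext ?_)
  simpa only [esymmAlgHom_apply] using h

theorem mem_range_aeval_esymm_iff {p : MvPolynomial (Fin k) S} :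
    p ∈ Set.range (aeval (R := S) fun i : Fin k => esymm (Fin k) S (i + 1)) ↔ p.IsSymmetric := by
  constructor
  · rintro ⟨q, rfl⟩
    rw [← esymmAlgHom_apply]
    exact (esymmAlgHom (Fin k) S k q).2
  · intro hp
    obtain ⟨q, hq⟩ := (esymmAlgHom_fin_bijective S k).2 ⟨p, hp⟩
    exact ⟨q, by rw [← esymmAlgHom_apply, hq]⟩

theorem map_aeval_esymm (φ : S →+* T) (q : MvPolynomial (Fin k) S) :
    map φ (aeval (fun i : Fin k => esymm (Fin k) S (i + 1)) q) =
      aeval (fun i : Fin k => esymm (Fin k) T (i + 1)) (map φ q) := by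
  induction q using MvPolynomial.induction_on with
  | C r => simp
  | add p q hp hq => simp only [map_add, hp, hq]
  | mul_X p i hp => simp only [map_mul, hp, aeval_X, map_X, map_esymm]

end MvPolynomial

namespace MvPowerSeries

variable {R σ : Type*} [CommSemiring R] [Finite σ] [DecidableEq σ]

-- With positive weights an exponent of weight `k` is `≤ k` in every variable, so the truncation
-- loses nothing (`coeff_weightedPart`).
noncomputable def weightedPart (w : σ → ℕ) (k : ℕ) (f : MvPowerSeries σ R) : MvPolynomial σ R :=
  MvPolynomial.weightedHomogeneousComponent w k
    (trunc' R (Finsupp.equivFunOnFinite.symm fun _ => k) f)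

theorem isWeightedHomogeneous_weightedPart (w : σ → ℕ) (k : ℕ) (f : MvPowerSeries σ R) :
    (weightedPart w k f).IsWeightedHomogeneous w k :=
  MvPolynomial.weightedHomogeneousComponent_isWeightedHomogeneous _ _

theorem coeff_weightedPart {w : σ → ℕ} (hw : ∀ s, w s ≠ 0) (k : ℕ) (f : MvPowerSeries σ R)
    (d : σ →₀ ℕ) :
    (weightedPart w k f).coeff d = if Finsupp.weight w d = k then coeff d f else 0 := by
  rw [weightedPart, MvPolynomial.coeff_weightedHomogeneousComponent]
  split_ifs with hd
  · rw [coeff_trunc', if_pos (Finsupp.le_def.mpr fun s => by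
      simpa [← hd] using Finsupp.le_weight w (hw s) d)]
  · rfl

theorem coeff_weightedPart_one (k : ℕ) (F : MvPowerSeries σ R) (d : σ →₀ ℕ) :
    (weightedPart 1 k F).coeff d = if d.degree = k then coeff d F else 0 := by
  rw [coeff_weightedPart (w := 1) (fun _ => one_ne_zero), Finsupp.degree_eq_weight_one, Pi.one_def]

theorem ext_weightedPart {w : σ → ℕ} (hw : ∀ s, w s ≠ 0) {f g : MvPowerSeries σ R}
    (h : ∀ k, weightedPart w k f = weightedPart w k g) : f = g := by
  ext d
  simpa [coeff_weightedPart hw] using congr_arg (MvPolynomial.coeff d) (h (Finsupp.weight w d))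

theorem exists_weightedPart_eq {w : σ → ℕ} (hw : ∀ s, w s ≠ 0) (q : ℕ → MvPolynomial σ R)
    (hq : ∀ k, (q k).IsWeightedHomogeneous w k) : ∃ f, ∀ k, weightedPart w k f = q k := by
  obtain ⟨f, hf⟩ : ∃ f : MvPowerSeries σ R, ∀ d, coeff d f = (q (Finsupp.weight w d)).coeff d :=
    ⟨fun d => (q (Finsupp.weight w d)).coeff d, fun _ => rfl⟩
  refine ⟨f, fun k => ?_⟩
  ext d
  rw [coeff_weightedPart hw]
  split_ifs with hd
  · rw [hf, hd]
  · exact ((hq k).coeff_eq_zero d hd).symm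

theorem forall_coeff_equivMapDomain_eq_iff (e : σ ≃ σ) (F : MvPowerSeries σ R) :
    (∀ d, coeff (d.equivMapDomain e) F = coeff d F) ↔
      ∀ k, MvPolynomial.rename e (weightedPart 1 k F) = weightedPart 1 k F := by
  have hdeg (d : σ →₀ ℕ) : (d.equivMapDomain e).degree = d.degree := by
    rw [Finsupp.equivMapDomain_eq_mapDomain, Finsupp.degree_mapDomain]
  simp only [MvPolynomial.rename_eq_self_iff, coeff_weightedPart_one, hdeg]
  constructor
  · intro h k d
    rw [h]
  · intro h d
    simpa using h d.degree d

end MvPowerSeries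

section Substitution

variable {R σ τ : Type*} [CommRing R] [Fintype σ] [DecidableEq σ]

theorem coeff_substPowerSeries (a : σ → MvPolynomial τ R) (f : MvPowerSeries σ R)
    (d : τ →₀ ℕ) :
    MvPowerSeries.coeff d (substPowerSeries a f) =
      coeff d (aeval a
        (MvPowerSeries.trunc' R (Finsupp.equivFunOnFinite.symm fun _ => d.degree) f)) := by
  simp only [MvPowerSeries.trunc', MvPowerSeries.truncFinset_apply, map_sum, aeval_monomial,
    algebraMap_eq, coeff_sum, coeff_C_mul, Finsupp.prod_pow]
  rfl

variable [Fintype τ] [DecidableEq τ] {w : σ → ℕ} {a : σ → MvPolynomial τ R}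

theorem weightedPart_one_substPowerSeries (ha : ∀ s, (a s).IsHomogeneous (w s)) (k : ℕ)
    (f : MvPowerSeries σ R) :
    MvPowerSeries.weightedPart 1 k (substPowerSeries a f) =
      aeval a (MvPowerSeries.weightedPart w k f) := by
  ext d
  rw [MvPowerSeries.coeff_weightedPart_one, MvPowerSeries.weightedPart,
    ← homogeneousComponent_aeval ha, coeff_homogeneousComponent]
  split_ifs with hd
  · rw [coeff_substPowerSeries, hd]
  · rfl

theorem substPowerSeries_injective (ha : ∀ s, (a s).IsHomogeneous (w s)) (hw : ∀ s, w s ≠ 0)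
    (hinj : Function.Injective (aeval (R := R) a)) : Function.Injective (substPowerSeries a) := by
  intro f g hfg
  refine MvPowerSeries.ext_weightedPart hw fun k => hinj ?_
  rw [← weightedPart_one_substPowerSeries ha, ← weightedPart_one_substPowerSeries ha, hfg]

theorem range_substPowerSeries (ha : ∀ s, (a s).IsHomogeneous (w s)) (hw : ∀ s, w s ≠ 0) :
    Set.range (substPowerSeries a) =
      {F | ∀ k, MvPowerSeries.weightedPart 1 k F ∈ Set.range (aeval (R := R) a)} := by
  ext F
  constructor
  · rintro ⟨f, rfl⟩ k
    exact ⟨_, (weightedPart_one_substPowerSeries ha k f).symm⟩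
  · intro hF
    choose p hp using hF
    obtain ⟨f, hf⟩ := MvPowerSeries.exists_weightedPart_eq hw _
      fun k => weightedHomogeneousComponent_isWeightedHomogeneous k (p k)
    refine ⟨f, MvPowerSeries.ext_weightedPart (w := 1) (fun _ => one_ne_zero) fun k => ?_⟩
    rw [weightedPart_one_substPowerSeries ha, hf, ← homogeneousComponent_aeval ha, hp,
      homogeneousComponent_eq_self (MvPowerSeries.isWeightedHomogeneous_weightedPart 1 k F)]

end Substitution

section BlockEsymm

variable (R : Type*) [CommRing R] (m n : ℕ)

def blockWeight : Fin m ⊕ Fin n → ℕ :=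
  Sum.elim (fun i => i.1 + 1) (fun j => j.1 + 1)

theorem blockWeight_ne_zero (s : Fin m ⊕ Fin n) : blockWeight m n s ≠ 0 := by
  cases s <;> simp [blockWeight]

theorem isHomogeneous_blockEsymm (s : Fin m ⊕ Fin n) :
    (blockEsymm R m n s).IsHomogeneous (blockWeight m n s) := by
  cases s with
  | inl i => exact (isHomogeneous_esymm_s4 R _ _).rename_isHomogeneous
  | inr j => exact (isHomogeneous_esymm_s4 R _ _).rename_isHomogeneous

theorem sumAlgEquiv_aeval_blockEsymm (p : MvPolynomial (Fin m ⊕ Fin n) R) :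
    sumAlgEquiv R (Fin m) (Fin n) (aeval (blockEsymm R m n) p) =
      aeval (fun i : Fin m => esymm (Fin m) (MvPolynomial (Fin n) R) (i + 1))
        (map (aeval fun j : Fin n => esymm (Fin n) R (j + 1)).toRingHom
          (sumAlgEquiv R (Fin m) (Fin n) p)) := by
  induction p using MvPolynomial.induction_on with
  | C r => simp
  | add p q hp hq => simp only [map_add, hp, hq]
  | mul_X p s hp =>
    simp only [map_mul, hp]
    congr 1
    cases s with
    | inl i =>
      simpa [blockEsymm, map_esymm] using
        AlgHom.congr_fun (sumAlgEquiv_comp_rename_inl R (Fin m) (Fin n)) (esymm (Fin m) R (i + 1))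
    | inr j =>
      simpa [blockEsymm] using
        AlgHom.congr_fun (sumAlgEquiv_comp_rename_inr R (Fin m) (Fin n)) (esymm (Fin n) R (j + 1))

theorem sumAlgEquiv_rename_sumCongr (g : Equiv.Perm (Fin m)) (h : Equiv.Perm (Fin n))
    (p : MvPolynomial (Fin m ⊕ Fin n) R) :
    sumAlgEquiv R (Fin m) (Fin n) (rename (Equiv.sumCongr g h) p) =
      rename g (map (rename (R := R) h).toRingHom (sumAlgEquiv R (Fin m) (Fin n) p)) := by
  induction p using MvPolynomial.induction_on with
  | C r => simp
  | add p q hp hq => simp only [map_add, hp, hq]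
  | mul_X p s hp =>
    simp only [map_mul, hp]
    congr 1
    cases s <;> simp [sumAlgEquiv_X_inl, sumAlgEquiv_X_inr]

theorem aeval_blockEsymm_injective : Function.Injective (aeval (R := R) (blockEsymm R m n)) := by
  intro p q hpq
  have h := congr_arg (sumAlgEquiv R (Fin m) (Fin n)) hpq
  rw [sumAlgEquiv_aeval_blockEsymm, sumAlgEquiv_aeval_blockEsymm] at h
  exact (sumAlgEquiv R _ _).injective
    (map_injective _ (aeval_esymm_injective R n) (aeval_esymm_injective _ m h))

theorem rename_sumCongr_aeval_blockEsymm (g : Equiv.Perm (Fin m)) (h : Equiv.Perm (Fin n))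
    (p : MvPolynomial (Fin m ⊕ Fin n) R) :
    rename (Equiv.sumCongr g h) (aeval (blockEsymm R m n) p) = aeval (blockEsymm R m n) p := by
  rw [comp_aeval_apply]
  congr 2 with s
  cases s with
  | inl i =>
    simp only [blockEsymm, Sum.elim_inl, rename_rename]
    rw [show ⇑(Equiv.sumCongr g h) ∘ Sum.inl = Sum.inl ∘ g from rfl, ← rename_rename,
      esymm_isSymmetric]
  | inr j =>
    simp only [blockEsymm, Sum.elim_inr, rename_rename]
    rw [show ⇑(Equiv.sumCongr g h) ∘ Sum.inr = Sum.inr ∘ h from rfl, ← rename_rename,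
      esymm_isSymmetric]

theorem exists_aeval_esymm_map_aeval_esymm_eq
    {q : MvPolynomial (Fin m) (MvPolynomial (Fin n) R)}
    (hq : ∀ (g : Equiv.Perm (Fin m)) (h : Equiv.Perm (Fin n)),
      rename g (map (rename (R := R) h).toRingHom q) = q) :
    ∃ p, aeval (R := MvPolynomial (Fin n) R)
      (fun i : Fin m => esymm (Fin m) (MvPolynomial (Fin n) R) (i + 1))
      (map (aeval (R := R) fun j : Fin n => esymm (Fin n) R (j + 1)).toRingHom p) = q := by
  have hsym : q.IsSymmetric := fun g => by simpa [map_id] using hq g 1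
  obtain ⟨q, rfl⟩ := mem_range_aeval_esymm_iff.mpr hsym
  -- Substituting the `eᵢ` is injective and commutes with permuting the variables of the
  -- coefficients, so its preimage of `q` has symmetric coefficients.
  have hfix : ∀ h : Equiv.Perm (Fin n), map (rename (R := R) h).toRingHom q = q := fun h =>
    aeval_esymm_injective _ m (by rw [← map_aeval_esymm]; simpa using hq 1 h)
  obtain ⟨p, rfl⟩ :
      q ∈ Set.range (map (aeval fun j : Fin n => esymm (Fin n) R (j + 1)).toRingHom) := by
    rw [mem_range_map_iff_coeffs_subset]
    intro c hc
    obtain ⟨d, -, rfl⟩ := mem_coeffs_iff.mp hc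
    exact mem_range_aeval_esymm_iff.mpr fun h =>
      (coeff_map _ q d).symm.trans (congr_arg (coeff d) (hfix h))
  exact ⟨p, rfl⟩

theorem mem_range_aeval_blockEsymm_iff {p : MvPolynomial (Fin m ⊕ Fin n) R} :
    p ∈ Set.range (aeval (R := R) (blockEsymm R m n)) ↔
      ∀ (g : Equiv.Perm (Fin m)) (h : Equiv.Perm (Fin n)), rename (Equiv.sumCongr g h) p = p := by
  constructor
  · rintro ⟨q, rfl⟩ g h
    exact rename_sumCongr_aeval_blockEsymm R m n g h q
  · intro hp
    obtain ⟨q, hq⟩ := exists_aeval_esymm_map_aeval_esymm_eq R m n (q := sumAlgEquiv R _ _ p)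
      fun g h => by rw [← sumAlgEquiv_rename_sumCongr, hp]
    refine ⟨(sumAlgEquiv R _ _).symm q, (sumAlgEquiv R _ _).injective ?_⟩
    rw [sumAlgEquiv_aeval_blockEsymm, AlgEquiv.apply_symm_apply, hq]

end BlockEsymm

/-- The substitution homomorphism R[[c′₁, …, c′ₘ, c″₁, …, c″ₙ]] → R[[t′₁, …, t′ₘ, t″₁, …, t″ₙ]],
c′ᵢ ↦ eᵢ(t′₁, …, t′ₘ), c″ⱼ ↦ eⱼ(t″₁, …, t″ₙ), is injective, and its image is exactly the
set of power series fixed by the blockwise action of Perm(Fin m) × Perm(Fin n) permuting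
the t′-variables among themselves and the t″-variables among themselves. -/
theorem subst_blockEsymm_injective_range (R : Type*) [CommRing R] (m n : ℕ) :
    Function.Injective (substPowerSeries (blockEsymm R m n)) ∧
    Set.range (substPowerSeries (blockEsymm R m n)) =
      {F : MvPowerSeries (Fin m ⊕ Fin n) R |
        ∀ (g : Equiv.Perm (Fin m)) (h : Equiv.Perm (Fin n)) (d : Fin m ⊕ Fin n →₀ ℕ),
          MvPowerSeries.coeff (Finsupp.equivMapDomain (Equiv.sumCongr g h) d) F =
            MvPowerSeries.coeff d F} := by
  have ha := isHomogeneous_blockEsymm R m n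
  have hw := blockWeight_ne_zero m n
  refine ⟨substPowerSeries_injective ha hw (aeval_blockEsymm_injective R m n), ?_⟩
  rw [range_substPowerSeries ha hw]
  ext F
  simp only [Set.mem_ofPred_eq, mem_range_aeval_blockEsymm_iff,
    MvPowerSeries.forall_coeff_equivMapDomain_eq_iff]
  exact ⟨fun H g h k => H k g h, fun H k g h => H g h k⟩
end
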